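/- Single-edge influence on the model output for linear GCN (Corollary appendix E.4, matrix form): assume H := Xᵀ Cᵀ C X is invertible, let Ξ := e_i e_jᵀ + e_j e_iᵀ be the perturbation matrix of the undirected edge (v_i, v_j), and define w*(ε) := (Xᵀ (C + εΞ)ᵀ (C + εΞ) X)⁻¹ Xᵀ (C + εΞ)ᵀ y with w* := w*(0), and P(ε) := (C + εΞ) X w*(ε). Then the derivative of P at ε = 0 equals (x_jᵀ w*) e_i + (x_iᵀ w*) e_j + C X H⁻¹ q, where q := (y_j − z_jᵀ w*) x_i + (y_i − z_iᵀ w*) x_j − ((x_jᵀ w*) z_i + (x_iᵀ w*) z_j) and z_l denotes the l-th row of Z := C X. -/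

import Mathlib

/-!
The output is the fitted value `A(ε) w*(ε)` of the least-squares problem with design matrix
`A(ε) = (C + εΞ) X`, whose derivative is `A' = Ξ X`. Differentiating the normal equations
`Aᵀ A w* = Aᵀ y` gives `w*' = H⁻¹ (A'ᵀ (y - A w*) - Aᵀ A' w*)`, and the product rule gives
`P' = A' w* + A w*'`. Since `Ξ v = v_j e_i + v_i e_j`, the three terms `A' w*`, `A'ᵀ (y - A w*)`
and `Aᵀ A' w*` are exactly the ones displayed in the statement.
-/

open Matrix

-- Any norm gives the same derivatives on these finite-dimensional spaces; the `ℓ∞` operator norm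
-- makes square matrices a normed algebra, which the derivative of inversion needs.
attribute [local instance] Matrix.linftyOpNormedAddCommGroup Matrix.linftyOpNormedSpace
  Matrix.linftyOpNormedRing Matrix.linftyOpNormedAlgebra

section Calculus

variable {𝕜 : Type*} [NontriviallyNormedField 𝕜] [CompleteSpace 𝕜]
  {l m p : Type*} [Fintype l] [Fintype m] [Fintype p] {t : 𝕜}

theorem HasDerivAt.matrix_mul {A : 𝕜 → Matrix l m 𝕜} {B : 𝕜 → Matrix m p 𝕜}
    {A' : Matrix l m 𝕜} {B' : Matrix m p 𝕜} (hA : HasDerivAt A A' t) (hB : HasDerivAt B B' t) :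
    HasDerivAt (fun ε => A ε * B ε) (A' * B t + A t * B') t := by
  let mul : Matrix l m 𝕜 →L[𝕜] Matrix m p 𝕜 →L[𝕜] Matrix l p 𝕜 :=
    LinearMap.toContinuousLinearMap
      (LinearMap.toContinuousLinearMap.toLinearMap ∘ₗ mulLinearMap 𝕜)
  have h : HasDerivAt (fun ε => A ε * B ε) (A t * B' + A' * B t) t :=
    mul.hasDerivAt_of_bilinear (fun _ => hA) (fun _ => hB)
  rwa [add_comm]

theorem HasDerivAt.matrix_mulVec {A : 𝕜 → Matrix m p 𝕜} {v : 𝕜 → p → 𝕜}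
    {A' : Matrix m p 𝕜} {v' : p → 𝕜} (hA : HasDerivAt A A' t) (hv : HasDerivAt v v' t) :
    HasDerivAt (fun ε => A ε *ᵥ v ε) (A' *ᵥ v t + A t *ᵥ v') t := by
  let mulVec : Matrix m p 𝕜 →L[𝕜] (p → 𝕜) →L[𝕜] m → 𝕜 :=
    LinearMap.toContinuousLinearMap
      (LinearMap.toContinuousLinearMap.toLinearMap ∘ₗ mulVecBilin 𝕜 𝕜)
  have h : HasDerivAt (fun ε => A ε *ᵥ v ε) (A t *ᵥ v' + A' *ᵥ v t) t :=
    mulVec.hasDerivAt_of_bilinear (fun _ => hA) (fun _ => hv)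
  rwa [add_comm]

theorem HasDerivAt.matrix_transpose {A : 𝕜 → Matrix m p 𝕜} {A' : Matrix m p 𝕜}
    (hA : HasDerivAt A A' t) : HasDerivAt (fun ε => (A ε)ᵀ) A'ᵀ t :=
  (LinearMap.toContinuousLinearMap (transposeLinearEquiv m p 𝕜 𝕜).toLinearMap).hasFDerivAt
    |>.comp_hasDerivAt t hA

theorem HasDerivAt.matrix_inv [DecidableEq m] {A : 𝕜 → Matrix m m 𝕜} {A' : Matrix m m 𝕜}
    (hA : HasDerivAt A A' t) (ht : IsUnit (A t)) :
    HasDerivAt (fun ε => (A ε)⁻¹) (-((A t)⁻¹ * A' * (A t)⁻¹)) t := by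
  obtain ⟨u, hu⟩ := ht
  -- instance search does not find completeness of `Matrix m m 𝕜` for this norm
  have : HasSummableGeomSeries (Matrix m m 𝕜) :=
    @instHasSummableGeomSeriesOfCompleteSpace _ _ (FiniteDimensional.complete 𝕜 _)
  have hinv : HasFDerivAt Ring.inverse (-ContinuousLinearMap.mulLeftRight 𝕜 _ ↑u⁻¹ ↑u⁻¹) (A t) :=
    hu ▸ hasFDerivAt_ringInverse u
  have hAt : ↑u⁻¹ = (A t)⁻¹ := by rw [← hu, nonsing_inv_eq_ringInverse, Ring.inverse_unit]
  rw [hAt] at hinv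
  have h : HasDerivAt (fun ε => Ring.inverse (A ε)) (-((A t)⁻¹ * A' * (A t)⁻¹)) t :=
    hinv.comp_hasDerivAt t hA
  simpa only [← nonsing_inv_eq_ringInverse] using h

end Calculus

section LeastSquares

variable {m p : Type*} [Fintype m] [Fintype p] [DecidableEq p]

/-- The normal-equation solution `(Aᵀ A)⁻¹ Aᵀ y`, i.e. the least-squares minimiser of `‖y - A w‖₂`
when `Aᵀ A` is invertible (and `0` otherwise, since then `(Aᵀ A)⁻¹ = 0`). -/
noncomputable def lstsq (A : Matrix m p ℝ) (y : m → ℝ) : p → ℝ := (Aᵀ * A)⁻¹ *ᵥ (Aᵀ *ᵥ y)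

theorem hasDerivAt_lstsq {A : ℝ → Matrix m p ℝ} {A' : Matrix m p ℝ} {t : ℝ} (y : m → ℝ)
    (hA : HasDerivAt A A' t) (hAtA : IsUnit ((A t)ᵀ * A t)) :
    HasDerivAt (fun ε => lstsq (A ε) y)
      (((A t)ᵀ * A t)⁻¹ *ᵥ
        (A'ᵀ *ᵥ (y - A t *ᵥ lstsq (A t) y) - (A t)ᵀ *ᵥ (A' *ᵥ lstsq (A t) y))) t := by
  have hM := (hA.matrix_transpose.matrix_mul hA).matrix_inv hAtA
  have hb := hA.matrix_transpose.matrix_mulVec (hasDerivAt_const t y)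
  refine (hM.matrix_mulVec hb).congr_deriv ?_
  simp only [lstsq, mulVec_zero, add_zero, neg_mulVec, ← mulVec_mulVec, add_mulVec, mulVec_sub,
    mulVec_add]
  abel

end LeastSquares

section Edge

variable {n p R : Type*} [CommSemiring R] [DecidableEq n]

def edgeMatrix (i j : n) : Matrix n n R :=
  vecMulVec (Pi.single i 1) (Pi.single j 1) + vecMulVec (Pi.single j 1) (Pi.single i 1)

theorem edgeMatrix_transpose (i j : n) : (edgeMatrix i j : Matrix n n R)ᵀ = edgeMatrix i j := by
  simp only [edgeMatrix, transpose_add, transpose_vecMulVec, add_comm]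

theorem edgeMatrix_mulVec [Fintype n] (i j : n) (v : n → R) :
    edgeMatrix i j *ᵥ v = v j • Pi.single i 1 + v i • Pi.single j 1 := by
  simp [edgeMatrix, add_mulVec, vecMulVec_mulVec]

theorem transpose_mulVec_edgeMatrix_mulVec [Fintype n] (i j : n) (M : Matrix n p R) (v : n → R) :
    Mᵀ *ᵥ (edgeMatrix i j *ᵥ v) = v j • M i + v i • M j := by
  simp only [edgeMatrix_mulVec, mulVec_add, mulVec_smul, mulVec_single_one]
  rfl

theorem edgeMatrix_mul_mulVec [Fintype n] [Fintype p] (i j : n) (M : Matrix n p R) (w : p → R) :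
    ((edgeMatrix i j : Matrix n n R) * M) *ᵥ w
      = (M j ⬝ᵥ w) • Pi.single i 1 + (M i ⬝ᵥ w) • Pi.single j 1 := by
  rw [← mulVec_mulVec, edgeMatrix_mulVec]
  rfl

theorem transpose_edgeMatrix_mul_mulVec [Fintype n] (i j : n) (M : Matrix n p R) (v : n → R) :
    ((edgeMatrix i j : Matrix n n R) * M)ᵀ *ᵥ v = v j • M i + v i • M j := by
  rw [transpose_mul, edgeMatrix_transpose, ← mulVec_mulVec, transpose_mulVec_edgeMatrix_mulVec]

theorem transpose_mulVec_edgeMatrix_mul_mulVec [Fintype n] [Fintype p] (i j : n)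
    (N M : Matrix n p R) (w : p → R) :
    Nᵀ *ᵥ (((edgeMatrix i j : Matrix n n R) * M) *ᵥ w) = (M j ⬝ᵥ w) • N i + (M i ⬝ᵥ w) • N j := by
  rw [← mulVec_mulVec, transpose_mulVec_edgeMatrix_mulVec]
  rfl

end Edge

/-- Single-edge influence on the model output for linear GCN (matrix form): with
`H := Xᵀ Cᵀ C X` invertible, `Ξ := e_i e_jᵀ + e_j e_iᵀ`,
`w*(ε) := (Xᵀ (C + εΞ)ᵀ (C + εΞ) X)⁻¹ Xᵀ (C + εΞ)ᵀ y`, `w* := w*(0)`, and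
`P(ε) := (C + εΞ) X w*(ε)`, the derivative of `P` at `ε = 0` equals
`(x_jᵀ w*) e_i + (x_iᵀ w*) e_j + C X H⁻¹ q`, where
`q := (y_j − z_jᵀ w*) x_i + (y_i − z_iᵀ w*) x_j − ((x_jᵀ w*) z_i + (x_iᵀ w*) z_j)`
and `z_l` is the `l`-th row of `Z := C X`. -/
theorem single_edge_influence_on_output (n d : ℕ) (C : Matrix (Fin n) (Fin n) ℝ)
    (X : Matrix (Fin n) (Fin d) ℝ) (y : Fin n → ℝ) (i j : Fin n)
    (Ξ : Matrix (Fin n) (Fin n) ℝ)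
    (hΞ : Ξ = vecMulVec (Pi.single i (1 : ℝ)) (Pi.single j (1 : ℝ))
            + vecMulVec (Pi.single j (1 : ℝ)) (Pi.single i (1 : ℝ)))
    (hH : Invertible (Xᵀ * Cᵀ * C * X))
    (wstar : Fin d → ℝ)
    (hw : wstar = (Xᵀ * Cᵀ * C * X)⁻¹.mulVec ((Xᵀ * Cᵀ).mulVec y)) :
    HasDerivAt
      (fun ε : ℝ =>
        ((C + ε • Ξ) * X).mulVec
          ((Xᵀ * (C + ε • Ξ)ᵀ * (C + ε • Ξ) * X)⁻¹.mulVec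
            ((Xᵀ * (C + ε • Ξ)ᵀ).mulVec y)))
      ((X j ⬝ᵥ wstar) • (Pi.single i 1 : Fin n → ℝ)
        + (X i ⬝ᵥ wstar) • (Pi.single j 1 : Fin n → ℝ)
        + (C * X).mulVec
            ((Xᵀ * Cᵀ * C * X)⁻¹.mulVec
              ((y j - (C * X) j ⬝ᵥ wstar) • X i + (y i - (C * X) i ⬝ᵥ wstar) • X j
                - ((X j ⬝ᵥ wstar) • (C * X) i + (X i ⬝ᵥ wstar) • (C * X) j)))) 0 := by
  replace hΞ : Ξ = edgeMatrix i j := hΞ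
  have hgram : ∀ B : Matrix (Fin n) (Fin n) ℝ, (B * X)ᵀ * (B * X) = Xᵀ * Bᵀ * B * X := fun B => by
    simp only [transpose_mul, Matrix.mul_assoc]
  have hlstsq : ∀ B : Matrix (Fin n) (Fin n) ℝ,
      lstsq (B * X) y = (Xᵀ * Bᵀ * B * X)⁻¹ *ᵥ ((Xᵀ * Bᵀ) *ᵥ y) := fun B => by
    rw [lstsq, hgram, transpose_mul]
  have hA : HasDerivAt (fun ε : ℝ => (C + ε • Ξ) * X) (Ξ * X) 0 := by
    refine ((((hasDerivAt_id (0 : ℝ)).smul_const Ξ).const_add C).matrix_mul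
      (hasDerivAt_const 0 X)).congr_deriv ?_
    simp only [one_smul, Matrix.mul_zero, add_zero]
  have hP := hA.matrix_mulVec (hasDerivAt_lstsq y hA (by
    rw [zero_smul, add_zero, hgram]; exact isUnit_of_invertible _))
  simp only [zero_smul, add_zero, hlstsq, ← hw] at hP
  refine hP.congr_deriv ?_
  rw [hgram, hΞ, transpose_mulVec_edgeMatrix_mul_mulVec, transpose_edgeMatrix_mul_mulVec,
    edgeMatrix_mul_mulVec]
  rfl
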